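/- The Poincaré geodesic γ_{x,v}(t) remains in the open unit ball for all t ≥ 0: if ‖x‖ < 1 and λ_x²‖v‖² = 1, then ‖γ_{x,v}(t)‖ < 1 for all t ≥ 0, and ‖γ_{x,v}(t)‖ → 1 as t → ∞. -/

import Mathlib

open scoped RealInnerProductSpace

/-- The conformal factor λ_x = 2/(1 - ‖x‖²). -/
noncomputable def lam {n : ℕ} (x : EuclideanSpace ℝ (Fin n)) : ℝ := 2 / (1 - ‖x‖ ^ 2)

/-- The closed-form unit-speed geodesic of the Poincaré ball. -/
noncomputable def geod {n : ℕ} (x v : EuclideanSpace ℝ (Fin n)) (t : ℝ) :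
    EuclideanSpace ℝ (Fin n) :=
  (1 + (lam x - 1) * Real.cosh t + (lam x) ^ 2 * ⟪x, v⟫ * Real.sinh t)⁻¹ •
    (((lam x) * Real.cosh t + (lam x) ^ 2 * ⟪x, v⟫ * Real.sinh t) • x +
      ((lam x) * Real.sinh t) • v)

theorem geod_stays_in_ball {n : ℕ} (x v : EuclideanSpace ℝ (Fin n))
    (hx : ‖x‖ < 1) (hv : (lam x) ^ 2 * ‖v‖ ^ 2 = 1) :
    (∀ t : ℝ, 0 ≤ t → ‖geod x v t‖ < 1) ∧
    Filter.Tendsto (fun t => ‖geod x v t‖) Filter.atTop (nhds 1) := by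
  have hxnn : (0:ℝ) ≤ ‖x‖ := norm_nonneg x
  have hx2 : (0:ℝ) < 1 - ‖x‖ ^ 2 := by nlinarith
  set L : ℝ := lam x with hLdef
  have h1 : L * (1 - ‖x‖ ^ 2) = 2 := by
    rw [hLdef, lam]; field_simp
  have hLpos : 0 < L := by nlinarith
  have hL1 : 1 < L := by nlinarith
  have hp : |⟪x, v⟫| ≤ ‖x‖ * ‖v‖ := abs_real_inner_le_norm x v
  have hvnn : (0:ℝ) ≤ ‖v‖ := norm_nonneg v
  have hLv : ‖v‖ = 1 / L := by
    have h2 : ‖v‖ ^ 2 = (1 / L) ^ 2 := by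
      field_simp
      nlinarith
    calc ‖v‖ = Real.sqrt (‖v‖ ^ 2) := (Real.sqrt_sq hvnn).symm
      _ = Real.sqrt ((1 / L) ^ 2) := by rw [h2]
      _ = 1 / L := Real.sqrt_sq (by positivity)
  -- the bound L²|p| ≤ L‖x‖
  have hp2 : L ^ 2 * |⟪x, v⟫| ≤ L * ‖x‖ := by
    have hL0 : L ≠ 0 := ne_of_gt hLpos
    calc L ^ 2 * |⟪x, v⟫| ≤ L ^ 2 * (‖x‖ * ‖v‖) := by
          apply mul_le_mul_of_nonneg_left hp (by positivity)
      _ = L * ‖x‖ := by rw [hLv]; field_simp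
  have heps : 0 < (L - 1) - L * ‖x‖ := by nlinarith
  set ε : ℝ := (L - 1) - L * ‖x‖ with hεdef
  set p : ℝ := ⟪x, v⟫ with hpdef
  set D : ℝ → ℝ := fun t => 1 + (L - 1) * Real.cosh t + L ^ 2 * p * Real.sinh t with hDdef
  -- lower bound for D
  have hDlb : ∀ t : ℝ, 0 ≤ t → 1 + ε * Real.cosh t ≤ D t := by
    intro t ht
    have hs : 0 ≤ Real.sinh t := Real.sinh_nonneg_iff.mpr ht
    have hsc : Real.sinh t ≤ Real.cosh t := (Real.sinh_lt_cosh t).le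
    have hc1 : 1 ≤ Real.cosh t := Real.one_le_cosh t
    have h2 : -(L * ‖x‖) * Real.sinh t ≤ L ^ 2 * p * Real.sinh t := by
      have : -(L * ‖x‖) ≤ L ^ 2 * p := by
        have := neg_abs_le p
        nlinarith [abs_nonneg p]
      nlinarith
    simp only [hDdef]
    nlinarith [mul_nonneg hxnn (sub_nonneg.mpr hsc), hLpos.le]
  have hDpos : ∀ t : ℝ, 0 ≤ t → 0 < D t := by
    intro t ht
    have := hDlb t ht
    nlinarith [Real.one_le_cosh t, heps]
  -- norm squared identity
  have hnsq : ∀ t : ℝ, 0 ≤ t → ‖geod x v t‖ ^ 2 = 1 - 2 / D t := by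
    intro t ht
    have hDt := hDpos t ht
    set c := Real.cosh t with hc
    set s := Real.sinh t with hs
    have hcs : c ^ 2 - s ^ 2 = 1 := Real.cosh_sq_sub_sinh_sq t
    set a : ℝ := L * c + L ^ 2 * p * s with ha
    set b : ℝ := L * s with hb
    have hw : ‖a • x + b • v‖ ^ 2
        = a ^ 2 * ‖x‖ ^ 2 + 2 * (a * b * p) + b ^ 2 * ‖v‖ ^ 2 := by
      rw [@norm_add_sq_real]
      rw [norm_smul, norm_smul, real_inner_smul_left, real_inner_smul_right]
      simp only [Real.norm_eq_abs, mul_pow, sq_abs, ← hpdef]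
      ring
    have hN : ‖a • x + b • v‖ ^ 2 = D t ^ 2 - 2 * D t := by
      have hL0 : L ≠ 0 := ne_of_gt hLpos
      have key : L ^ 2 * (a ^ 2 * ‖x‖ ^ 2 + 2 * (a * b * p) + b ^ 2 * ‖v‖ ^ 2)
          = L ^ 2 * (D t ^ 2 - 2 * D t) := by
        simp only [hDdef, ha, hb, ← hc, ← hs]
        linear_combination (-(L * (L * c + L ^ 2 * p * s) ^ 2)) * h1
          + (L ^ 2 * s ^ 2) * hv + (-(L ^ 2)) * (hcs)
      rw [hw]
      have := mul_left_cancel₀ (pow_ne_zero 2 hL0) key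
      linarith [this]
    have hgeod : geod x v t = (D t)⁻¹ • (a • x + b • v) := by
      simp only [geod, hDdef, ha, hb, ← hc, ← hs, hLdef, hpdef]
    rw [hgeod, norm_smul, mul_pow]
    rw [hN]
    have : ‖(D t)⁻¹‖ ^ 2 = (D t)⁻¹ ^ 2 := by
      rw [Real.norm_eq_abs, sq_abs]
    rw [this]
    field_simp
  constructor
  · intro t ht
    have h := hnsq t ht
    have hDt := hDpos t ht
    have h2 : 0 < 2 / D t := by positivity
    nlinarith [norm_nonneg (geod x v t)]
  · -- D → ∞
    have hDtop : Filter.Tendsto D Filter.atTop Filter.atTop := by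
      apply Filter.tendsto_atTop_mono' Filter.atTop
        (Filter.eventually_atTop.mpr ⟨0, fun t ht => hDlb t ht⟩)
      have hcosh : Filter.Tendsto Real.cosh Filter.atTop Filter.atTop := by
        apply Filter.tendsto_atTop_mono (fun t => ?_)
          (Real.tendsto_exp_atTop.atTop_div_const two_pos)
        rw [Real.cosh_eq]
        have := Real.exp_pos (-t)
        linarith
      exact Filter.tendsto_atTop_add_const_left _ 1 (hcosh.const_mul_atTop heps)
    have hdiv : Filter.Tendsto (fun t => 1 - 2 / D t) Filter.atTop (nhds 1) := by
      have : Filter.Tendsto (fun t => 2 / D t) Filter.atTop (nhds 0) :=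
        Filter.Tendsto.div_atTop tendsto_const_nhds hDtop
      simpa using tendsto_const_nhds.sub this
    have hsqrt : Filter.Tendsto (fun t => Real.sqrt (1 - 2 / D t))
        Filter.atTop (nhds 1) := by
      have := (Real.continuous_sqrt.tendsto 1).comp hdiv
      simpa [Function.comp_def] using this
    apply hsqrt.congr'
    filter_upwards [Filter.eventually_ge_atTop (0:ℝ)] with t ht
    rw [← hnsq t ht, Real.sqrt_sq (norm_nonneg _)]
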